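/- Let 0 ≤ i ≤ r−2 and 0 ≤ j ≤ r−2, and define g(λ) = {(i+1)λ}/{λ} (the scalar by which the open Hopf link colored by the simple module S_i acts on V_λ). Then as ε → 0 through nonzero complex values: (i) g(1+j−r+ε) and g(r−1−j+ε) both tend to (−1)^{i} {(i+1)(j+1)}/{j+1}; (ii) (−1/([1+j][ε])) · ( g(r−1−j+ε) − g(1+j−r+ε) ) tends to (−1)^{i} ( i{(i+2)(j+1)} − (i+2){i(j+1)} )/( [j+1]² {j+1} ). Thus the open Hopf link Φ_{S_i, P_j} on the projective cover P_j has semisimple coefficient a_{S_i} = (−1)^{i}{(i+1)(j+1)}/{j+1} and nilpotent coefficient b_{S_i} = (−1)^{i}( i{(i+2)(j+1)} − (i+2){i(j+1)} )/( [j+1]²{j+1} ). -/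

import Mathlib

/-- `q^z = exp(iπz/r)` for `q = exp(iπ/r)`. -/
noncomputable def qexp (r : ℕ) (z : ℂ) : ℂ := Complex.exp (Real.pi * Complex.I * z / r)

/-- The quantum bracket `{z} = q^z - q^{-z}`. -/
noncomputable def qbr (r : ℕ) (z : ℂ) : ℂ := qexp r z - qexp r (-z)

/-- The quantum number `[z] = {z}/{1}`. -/
noncomputable def qnum (r : ℕ) (z : ℂ) : ℂ := qbr r z / qbr r 1

/-- The scalar by which the open Hopf link colored by the simple module `S_i` acts on `V_λ`. -/
noncomputable def gS (r i : ℕ) (lam : ℂ) : ℂ :=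
  qbr r (((i : ℂ) + 1) * lam) / qbr r lam

open Complex Filter

noncomputable def qc (r : ℕ) : ℂ := Real.pi * Complex.I / r

lemma qexp_eq (r : ℕ) (z : ℂ) : qexp r z = Complex.exp (qc r * z) := by
  unfold qexp qc; ring_nf

lemma qexp_ne_zero (r : ℕ) (z : ℂ) : qexp r z ≠ 0 := Complex.exp_ne_zero _

lemma qexp_add (r : ℕ) (x y : ℂ) : qexp r (x + y) = qexp r x * qexp r y := by
  rw [qexp_eq, qexp_eq, qexp_eq, mul_add, Complex.exp_add]

lemma qexp_neg (r : ℕ) (x : ℂ) : qexp r (-x) = (qexp r x)⁻¹ := by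
  rw [qexp_eq, qexp_eq, mul_neg, Complex.exp_neg]

lemma qexp_nat_mul (r n : ℕ) (x : ℂ) : qexp r ((n:ℂ) * x) = qexp r x ^ n := by
  rw [qexp_eq, qexp_eq, ← Complex.exp_nat_mul]; ring_nf

lemma qbr_eq' (r : ℕ) (z : ℂ) : qbr r z = qexp r z - (qexp r z)⁻¹ := by
  rw [qbr, qexp_neg]

lemma qexp_r (r : ℕ) (hr : (r:ℂ) ≠ 0) : qexp r (r:ℂ) = -1 := by
  unfold qexp
  rw [mul_div_assoc, div_self hr, mul_one, Complex.exp_pi_mul_I]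

lemma qbr_sub_nat_r (r : ℕ) (hr : (r:ℂ) ≠ 0) (n : ℕ) (z : ℂ) :
    qbr r (z - (n:ℂ)*r) = (-1)^n * qbr r z := by
  have hq : qexp r ((n:ℂ)*(r:ℂ)) = (-1:ℂ)^n := by
    rw [qexp_nat_mul, qexp_r r hr]
  have hinv : ((-1:ℂ)^n)⁻¹ = (-1:ℂ)^n := by
    rw [← inv_pow]; norm_num
  unfold qbr
  rw [show z - (n:ℂ)*(r:ℂ) = z + (-((n:ℂ)*(r:ℂ))) by ring]
  rw [show -(z + -((n:ℂ)*(r:ℂ))) = -z + (n:ℂ)*(r:ℂ) by ring]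
  rw [qexp_add, qexp_add, qexp_neg, hq, hinv]
  ring

lemma qbr_neg (r : ℕ) (z : ℂ) : qbr r (-z) = -qbr r z := by
  unfold qbr; rw [neg_neg]; ring

lemma qbr_ne_zero_nat (r : ℕ) (hr : 2 ≤ r) (k : ℕ) (h1 : 1 ≤ k) (h2 : k ≤ r - 1) :
    qbr r (k:ℂ) ≠ 0 := by
  intro h
  have hr0 : (r:ℂ) ≠ 0 := by
    exact_mod_cast Nat.cast_ne_zero.mpr (by omega)
  have hpi : (Real.pi:ℂ) ≠ 0 := by exact_mod_cast Real.pi_ne_zero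
  have heq : Complex.exp (Real.pi * Complex.I * (k:ℂ) / r)
      = Complex.exp (Real.pi * Complex.I * (-(k:ℂ)) / r) := by
    have := sub_eq_zero.mp h
    simpa [qexp] using this
  obtain ⟨n, hn⟩ := Complex.exp_eq_exp_iff_exists_int.mp heq
  have hk : (k:ℂ) = (n:ℂ) * r := by
    field_simp at hn
    have h2' : (2*(Real.pi:ℂ)*Complex.I) * (k:ℂ) = (2*(Real.pi:ℂ)*Complex.I) * ((n:ℂ)*r) := by
      linear_combination (↑Real.pi * Complex.I) * hn
    exact mul_left_cancel₀ (by simp [hpi, Complex.I_ne_zero]) h2'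
  have hkz : (k:ℤ) = n * r := by exact_mod_cast hk
  have hrz : (1:ℤ) ≤ (r:ℤ) := by exact_mod_cast (by omega : 1 ≤ r)
  rcases le_or_gt n 0 with hn0 | hn0
  · have : (n:ℤ) * r ≤ 0 := mul_nonpos_of_nonpos_of_nonneg hn0 (by omega)
    omega
  · have h1n : (1:ℤ) ≤ n := hn0
    have : (r:ℤ) ≤ n * r := le_mul_of_one_le_left (by omega) h1n
    have hk2 : (k:ℤ) ≤ (r:ℤ) - 1 := by exact_mod_cast (by omega : (k:ℤ) ≤ (r:ℤ) - 1)
    omega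

lemma qbr_continuous (r : ℕ) : Continuous (qbr r) := by
  unfold qbr qexp; fun_prop

lemma qc_ne_zero (r : ℕ) (hr : (r:ℂ) ≠ 0) : qc r ≠ 0 := by
  unfold qc
  have hpi : (Real.pi:ℂ) ≠ 0 := by exact_mod_cast Real.pi_ne_zero
  exact div_ne_zero (mul_ne_zero hpi Complex.I_ne_zero) hr

lemma qbr_slope (r : ℕ) :
    Filter.Tendsto (fun z : ℂ => qbr r z / z) (nhdsWithin 0 {(0:ℂ)}ᶜ) (nhds (2 * qc r)) := by
  have hd : HasDerivAt (fun z : ℂ => qbr r z) (2 * qc r) 0 := by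
    have h1 : HasDerivAt (fun z : ℂ => Complex.exp (qc r * z)) (qc r) 0 := by
      simpa using ((hasDerivAt_id (0:ℂ)).const_mul (qc r)).cexp
    have h2 : HasDerivAt (fun z : ℂ => Complex.exp (qc r * (-z))) (-qc r) 0 := by
      simpa using (((hasDerivAt_id (0:ℂ)).neg).const_mul (qc r)).cexp
    have h3 := h1.sub h2
    have he : (fun z : ℂ => qbr r z) = fun z : ℂ =>
        Complex.exp (qc r * z) - Complex.exp (qc r * (-z)) := by
      funext z; rw [qbr, qexp_eq, qexp_eq]
    rw [he]
    exact h3.congr_deriv (by ring)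
  have h4 := hasDerivAt_iff_tendsto_slope.mp hd
  refine h4.congr (fun z => ?_)
  simp [slope_def_field, qbr, qexp]

lemma qbr_ratio (r : ℕ) (hr : (r:ℂ) ≠ 0) (k : ℕ) :
    Filter.Tendsto (fun ε : ℂ => qbr r ((k:ℂ)*ε) / qbr r ε)
      (nhdsWithin 0 {(0:ℂ)}ᶜ) (nhds (k:ℂ)) := by
  rcases Nat.eq_zero_or_pos k with hk | hk
  · subst hk
    simpa [div_eq_mul_inv, qbr, qexp] using tendsto_const_nhds (x := (0:ℂ))
      (f := nhdsWithin 0 {(0:ℂ)}ᶜ)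
  · have hkc : ((k:ℂ)) ≠ 0 := Nat.cast_ne_zero.mpr (by omega)
    have hS := qbr_slope r
    have hmap : Filter.Tendsto (fun ε : ℂ => (k:ℂ)*ε) (nhdsWithin 0 {(0:ℂ)}ᶜ)
        (nhdsWithin 0 {(0:ℂ)}ᶜ) := by
      rw [tendsto_nhdsWithin_iff]
      constructor
      · have : Filter.Tendsto (fun ε : ℂ => (k:ℂ)*ε) (nhds 0) (nhds ((k:ℂ)*0)) :=
          (continuous_const.mul continuous_id).tendsto 0
        simpa using this.mono_left nhdsWithin_le_nhds
      · exact eventually_mem_nhdsWithin.mono (fun x hx => by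
          simp only [Set.mem_compl_iff, Set.mem_singleton_iff] at hx ⊢
          exact mul_ne_zero hkc hx)
    have T2 : Filter.Tendsto (fun ε : ℂ => qbr r ((k:ℂ)*ε) / ((k:ℂ)*ε))
        (nhdsWithin 0 {(0:ℂ)}ᶜ) (nhds (2 * qc r)) := hS.comp hmap
    have hc : 2 * qc r ≠ 0 := mul_ne_zero two_ne_zero (qc_ne_zero r hr)
    have T3 := (T2.mul_const (k:ℂ)).div hS hc
    have hval : 2 * qc r * (k:ℂ) / (2 * qc r) = (k:ℂ) := by
      field_simp [qc_ne_zero r hr]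
    rw [hval] at T3
    refine T3.congr' ?_
    filter_upwards [eventually_mem_nhdsWithin] with ε hε
    simp only [Set.mem_compl_iff, Set.mem_singleton_iff] at hε
    rcases eq_or_ne (qbr r ε) 0 with hb | hb
    · simp [hb]
    · rw [Pi.div_apply]
      field_simp

lemma gS_left (r i : ℕ) (hr : (r:ℂ) ≠ 0) (w : ℂ) :
    gS r i (w - r) = (-1)^i * qbr r (((i:ℂ)+1)*w) / qbr r w := by
  unfold gS
  rw [show ((i:ℂ)+1)*(w - r) = ((i:ℂ)+1)*w - ((i+1:ℕ):ℂ)*r by push_cast; ring,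
      show w - (r:ℂ) = w - ((1:ℕ):ℂ)*r by push_cast; ring,
      qbr_sub_nat_r r hr, qbr_sub_nat_r r hr]
  rw [show ((-1:ℂ))^(i+1) * qbr r (((i:ℂ)+1)*w) = -((-1)^i * qbr r (((i:ℂ)+1)*w)) by ring,
      show ((-1:ℂ))^1 * qbr r w = -(qbr r w) by ring, neg_div_neg_eq]

lemma gS_right (r i : ℕ) (hr : (r:ℂ) ≠ 0) (w : ℂ) :
    gS r i ((r:ℂ) - w) = (-1)^i * qbr r (((i:ℂ)+1)*w) / qbr r w := by
  unfold gS
  rw [show ((i:ℂ)+1)*((r:ℂ) - w) = -(((i:ℂ)+1)*w - ((i+1:ℕ):ℂ)*r) by push_cast; ring,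
      show (r:ℂ) - w = -(w - ((1:ℕ):ℂ)*r) by push_cast; ring,
      qbr_neg, qbr_neg, qbr_sub_nat_r r hr, qbr_sub_nat_r r hr, neg_div_neg_eq]
  rw [show ((-1:ℂ))^(i+1) * qbr r (((i:ℂ)+1)*w) = -((-1)^i * qbr r (((i:ℂ)+1)*w)) by ring,
      show ((-1:ℂ))^1 * qbr r w = -(qbr r w) by ring, neg_div_neg_eq]

lemma qbr_mul (r : ℕ) (x y : ℂ) : qbr r x * qbr r y
    = qexp r (x+y) - qexp r (x-y) - qexp r (y-x) + qexp r (-(x+y)) := by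
  unfold qbr
  rw [show x-y = x + -y by ring, show y-x = y + -x by ring,
      show -(x+y) = -x + -y by ring, qexp_add, qexp_add, qexp_add, qexp_add]
  ring

lemma keyK (r i : ℕ) (m ε : ℂ) :
    qbr r (((i:ℂ)+1)*(m-ε)) * qbr r (m+ε) - qbr r (((i:ℂ)+1)*(m+ε)) * qbr r (m-ε)
      = qbr r ((i:ℂ)*m) * qbr r (((i:ℂ)+2)*ε) - qbr r (((i:ℂ)+2)*m) * qbr r ((i:ℂ)*ε) := by
  rw [qbr_mul, qbr_mul, qbr_mul, qbr_mul]
  ring_nf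

lemma ptwise (s A B P Q M E O N1 N2 N3 N4 : ℂ) (hK : A*P - B*Q = N1*N2 - N3*N4)
    (hP : P ≠ 0) (hQ : Q ≠ 0) (hM : M ≠ 0) (hE : E ≠ 0) (hO : O ≠ 0) :
    (-1/((M/O)*(E/O))) * (s*A/Q - s*B/P)
      = -s * O^2 * (N1*(N2/E) - N3*(N4/E)) / (M * Q * P) := by
  field_simp
  linear_combination (-s) * hK

/-- The open Hopf link `Φ_{S_i,P_j}` has semisimple coefficient
`a = (−1)^i {(i+1)(j+1)}/{j+1}` and nilpotent coefficient
`b = (−1)^i (i{(i+2)(j+1)} − (i+2){i(j+1)})/([j+1]²{j+1})`. -/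
theorem stmt12 (r : ℕ) (hr : 2 ≤ r) (i j : ℕ) (hi : i ≤ r - 2) (hj : j ≤ r - 2) :
    Filter.Tendsto (fun ε : ℂ => gS r i (1 + (j : ℂ) - (r : ℂ) + ε))
      (nhdsWithin 0 {(0 : ℂ)}ᶜ)
      (nhds ((-1 : ℂ) ^ i * qbr r (((i : ℂ) + 1) * ((j : ℂ) + 1)) / qbr r ((j : ℂ) + 1))) ∧
    Filter.Tendsto (fun ε : ℂ => gS r i ((r : ℂ) - 1 - (j : ℂ) + ε))
      (nhdsWithin 0 {(0 : ℂ)}ᶜ)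
      (nhds ((-1 : ℂ) ^ i * qbr r (((i : ℂ) + 1) * ((j : ℂ) + 1)) / qbr r ((j : ℂ) + 1))) ∧
    Filter.Tendsto
      (fun ε : ℂ => (-1 / (qnum r (1 + (j : ℂ)) * qnum r ε))
        * (gS r i ((r : ℂ) - 1 - (j : ℂ) + ε) - gS r i (1 + (j : ℂ) - (r : ℂ) + ε)))
      (nhdsWithin 0 {(0 : ℂ)}ᶜ)
      (nhds ((-1 : ℂ) ^ i
        * ((i : ℂ) * qbr r (((i : ℂ) + 2) * ((j : ℂ) + 1))
            - ((i : ℂ) + 2) * qbr r ((i : ℂ) * ((j : ℂ) + 1)))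
        / ((qnum r ((j : ℂ) + 1)) ^ 2 * qbr r ((j : ℂ) + 1)))) := by
  have hr0 : (r:ℂ) ≠ 0 := Nat.cast_ne_zero.mpr (by omega)
  have h1ne : qbr r (1:ℂ) ≠ 0 := by
    have := qbr_ne_zero_nat r hr 1 le_rfl (by omega)
    simpa using this
  have hmne : qbr r ((j:ℂ)+1) ≠ 0 := by
    have := qbr_ne_zero_nat r hr (j+1) (by omega) (by omega)
    push_cast at this
    exact this
  -- rewriting of the two gS functions
  have e1 : ∀ ε : ℂ, gS r i (1 + (j:ℂ) - r + ε)
      = (-1:ℂ)^i * qbr r (((i:ℂ)+1)*(((j:ℂ)+1)+ε)) / qbr r (((j:ℂ)+1)+ε) := by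
    intro ε
    rw [show (1 + (j:ℂ) - r + ε) = (((j:ℂ)+1+ε) - r) by ring]
    exact gS_left r i hr0 _
  have e2 : ∀ ε : ℂ, gS r i ((r:ℂ) - 1 - j + ε)
      = (-1:ℂ)^i * qbr r (((i:ℂ)+1)*(((j:ℂ)+1)-ε)) / qbr r (((j:ℂ)+1)-ε) := by
    intro ε
    rw [show ((r:ℂ) - 1 - j + ε) = ((r:ℂ) - (((j:ℂ)+1) - ε)) by ring]
    exact gS_right r i hr0 _
  -- continuity facts
  have cplus : Filter.Tendsto (fun ε : ℂ => qbr r (((j:ℂ)+1)+ε)) (nhds 0)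
      (nhds (qbr r ((j:ℂ)+1))) := by
    have : Continuous (fun ε : ℂ => qbr r (((j:ℂ)+1)+ε)) :=
      (qbr_continuous r).comp (continuous_const.add continuous_id)
    simpa using this.tendsto 0
  have cminus : Filter.Tendsto (fun ε : ℂ => qbr r (((j:ℂ)+1)-ε)) (nhds 0)
      (nhds (qbr r ((j:ℂ)+1))) := by
    have : Continuous (fun ε : ℂ => qbr r (((j:ℂ)+1)-ε)) :=
      (qbr_continuous r).comp (continuous_const.sub continuous_id)
    simpa using this.tendsto 0
  have cplusN : Filter.Tendsto (fun ε : ℂ => qbr r (((i:ℂ)+1)*(((j:ℂ)+1)+ε))) (nhds 0)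
      (nhds (qbr r (((i:ℂ)+1)*((j:ℂ)+1)))) := by
    have : Continuous (fun ε : ℂ => qbr r (((i:ℂ)+1)*(((j:ℂ)+1)+ε))) :=
      (qbr_continuous r).comp (continuous_const.mul (continuous_const.add continuous_id))
    simpa using this.tendsto 0
  have cminusN : Filter.Tendsto (fun ε : ℂ => qbr r (((i:ℂ)+1)*(((j:ℂ)+1)-ε))) (nhds 0)
      (nhds (qbr r (((i:ℂ)+1)*((j:ℂ)+1)))) := by
    have : Continuous (fun ε : ℂ => qbr r (((i:ℂ)+1)*(((j:ℂ)+1)-ε))) :=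
      (qbr_continuous r).comp (continuous_const.mul (continuous_const.sub continuous_id))
    simpa using this.tendsto 0
  have T1 : Filter.Tendsto (fun ε : ℂ => gS r i (1 + (j : ℂ) - (r : ℂ) + ε))
      (nhdsWithin 0 {(0 : ℂ)}ᶜ)
      (nhds ((-1 : ℂ) ^ i * qbr r (((i : ℂ) + 1) * ((j : ℂ) + 1)) / qbr r ((j : ℂ) + 1))) := by
    have := ((tendsto_const_nhds (x := ((-1:ℂ)^i))).mul cplusN).div cplus hmne
    exact (Filter.Tendsto.congr (fun ε => (e1 ε).symm) (this.mono_left nhdsWithin_le_nhds))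
  have T2 : Filter.Tendsto (fun ε : ℂ => gS r i ((r : ℂ) - 1 - (j : ℂ) + ε))
      (nhdsWithin 0 {(0 : ℂ)}ᶜ)
      (nhds ((-1 : ℂ) ^ i * qbr r (((i : ℂ) + 1) * ((j : ℂ) + 1)) / qbr r ((j : ℂ) + 1))) := by
    have := ((tendsto_const_nhds (x := ((-1:ℂ)^i))).mul cminusN).div cminus hmne
    exact (Filter.Tendsto.congr (fun ε => (e2 ε).symm) (this.mono_left nhdsWithin_le_nhds))
  refine ⟨T1, T2, ?_⟩
  -- Part (iii)
  -- eventual nonvanishing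
  have hc : 2 * qc r ≠ 0 := mul_ne_zero two_ne_zero (qc_ne_zero r hr0)
  have hevε : ∀ᶠ ε in nhdsWithin (0:ℂ) {(0:ℂ)}ᶜ, qbr r ε ≠ 0 := by
    have := (qbr_slope r).eventually_ne hc
    exact this.mono (fun x hx h0 => hx (by simp [h0]))
  have hevp : ∀ᶠ ε in nhdsWithin (0:ℂ) {(0:ℂ)}ᶜ, qbr r (((j:ℂ)+1)+ε) ≠ 0 :=
    (cplus.eventually_ne hmne).filter_mono nhdsWithin_le_nhds
  have hevm : ∀ᶠ ε in nhdsWithin (0:ℂ) {(0:ℂ)}ᶜ, qbr r (((j:ℂ)+1)-ε) ≠ 0 :=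
    (cminus.eventually_ne hmne).filter_mono nhdsWithin_le_nhds
  -- the auxiliary function Φ
  set m : ℂ := (j:ℂ)+1 with hm
  set s : ℂ := (-1:ℂ)^i with hs
  set Φ : ℂ → ℂ := fun ε =>
    -s * (qbr r 1)^2 * (qbr r ((i:ℂ)*m) * (qbr r (((i:ℂ)+2)*ε)/qbr r ε)
        - qbr r (((i:ℂ)+2)*m) * (qbr r ((i:ℂ)*ε)/qbr r ε))
      / (qbr r m * qbr r (m-ε) * qbr r (m+ε)) with hΦ
  -- Tendsto of Φ
  have ratio1 : Filter.Tendsto (fun ε : ℂ => qbr r (((i:ℂ)+2)*ε)/qbr r ε)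
      (nhdsWithin 0 {(0:ℂ)}ᶜ) (nhds ((i:ℂ)+2)) := by
    have := qbr_ratio r hr0 (i+2)
    have he : (fun ε : ℂ => qbr r (((i+2:ℕ):ℂ)*ε)/qbr r ε)
        = fun ε : ℂ => qbr r (((i:ℂ)+2)*ε)/qbr r ε := by
      funext ε; push_cast; ring_nf
    rw [he] at this
    have hv : ((i+2:ℕ):ℂ) = (i:ℂ)+2 := by push_cast; ring
    rw [hv] at this
    exact this
  have ratio2 : Filter.Tendsto (fun ε : ℂ => qbr r ((i:ℂ)*ε)/qbr r ε)
      (nhdsWithin 0 {(0:ℂ)}ᶜ) (nhds ((i:ℂ))) := qbr_ratio r hr0 i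
  have Tden : Filter.Tendsto (fun ε : ℂ => qbr r m * qbr r (m-ε) * qbr r (m+ε))
      (nhdsWithin 0 {(0:ℂ)}ᶜ) (nhds (qbr r m * qbr r m * qbr r m)) :=
    (((tendsto_const_nhds (x := qbr r m)).mul cminus).mul cplus).mono_left nhdsWithin_le_nhds
  have hden3 : qbr r m * qbr r m * qbr r m ≠ 0 := by
    exact mul_ne_zero (mul_ne_zero hmne hmne) hmne
  have Tnum : Filter.Tendsto (fun ε : ℂ =>
      -s * (qbr r 1)^2 * (qbr r ((i:ℂ)*m) * (qbr r (((i:ℂ)+2)*ε)/qbr r ε)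
        - qbr r (((i:ℂ)+2)*m) * (qbr r ((i:ℂ)*ε)/qbr r ε)))
      (nhdsWithin 0 {(0:ℂ)}ᶜ)
      (nhds (-s * (qbr r 1)^2 * (qbr r ((i:ℂ)*m) * ((i:ℂ)+2)
        - qbr r (((i:ℂ)+2)*m) * (i:ℂ)))) := by
    exact tendsto_const_nhds.mul
      (((tendsto_const_nhds (x := qbr r ((i:ℂ)*m))).mul ratio1).sub
        ((tendsto_const_nhds (x := qbr r (((i:ℂ)+2)*m))).mul ratio2))
  have TΦ : Filter.Tendsto Φ (nhdsWithin 0 {(0:ℂ)}ᶜ)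
      (nhds (-s * (qbr r 1)^2 * (qbr r ((i:ℂ)*m) * ((i:ℂ)+2)
        - qbr r (((i:ℂ)+2)*m) * (i:ℂ)) / (qbr r m * qbr r m * qbr r m))) :=
    Tnum.div Tden hden3
  -- the limit value equals the stated one
  have hval : -s * (qbr r 1)^2 * (qbr r ((i:ℂ)*m) * ((i:ℂ)+2)
        - qbr r (((i:ℂ)+2)*m) * (i:ℂ)) / (qbr r m * qbr r m * qbr r m)
      = s * ((i : ℂ) * qbr r (((i : ℂ) + 2) * m)
            - ((i : ℂ) + 2) * qbr r ((i : ℂ) * m))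
        / ((qnum r m) ^ 2 * qbr r m) := by
    unfold qnum
    field_simp
    ring
  -- eventual equality of the function with Φ
  have hEq : (fun ε : ℂ => (-1 / (qnum r (1 + (j : ℂ)) * qnum r ε))
        * (gS r i ((r : ℂ) - 1 - (j : ℂ) + ε) - gS r i (1 + (j : ℂ) - (r : ℂ) + ε)))
      =ᶠ[nhdsWithin 0 {(0:ℂ)}ᶜ] Φ := by
    filter_upwards [hevε, hevp, hevm] with ε hε hp hq
    rw [e1 ε, e2 ε]
    have hqn : qnum r (1 + (j:ℂ)) = qbr r m / qbr r 1 := by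
      rw [show (1 + (j:ℂ)) = m by rw [hm]; ring]; rfl
    rw [hqn]
    show (-1/((qbr r m / qbr r 1) * (qbr r ε / qbr r 1)))
        * (s * qbr r (((i:ℂ)+1)*(m-ε)) / qbr r (m-ε)
          - s * qbr r (((i:ℂ)+1)*(m+ε)) / qbr r (m+ε)) = Φ ε
    rw [hΦ]
    exact ptwise s (qbr r (((i:ℂ)+1)*(m-ε))) (qbr r (((i:ℂ)+1)*(m+ε)))
      (qbr r (m+ε)) (qbr r (m-ε)) (qbr r m) (qbr r ε) (qbr r 1)
      (qbr r ((i:ℂ)*m)) (qbr r (((i:ℂ)+2)*ε)) (qbr r (((i:ℂ)+2)*m)) (qbr r ((i:ℂ)*ε))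
      (keyK r i m ε) hp hq hmne hε h1ne
  rw [show ((-1 : ℂ) ^ i
        * ((i : ℂ) * qbr r (((i : ℂ) + 2) * ((j : ℂ) + 1))
            - ((i : ℂ) + 2) * qbr r ((i : ℂ) * ((j : ℂ) + 1)))
        / ((qnum r ((j : ℂ) + 1)) ^ 2 * qbr r ((j : ℂ) + 1)))
      = s * ((i : ℂ) * qbr r (((i : ℂ) + 2) * m)
            - ((i : ℂ) + 2) * qbr r ((i : ℂ) * m))
        / ((qnum r m) ^ 2 * qbr r m) from by rw [hs, hm]]
  rw [← hval]
  exact TΦ.congr' hEq.symm
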